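/- arXiv:1107.4512 — 2 statements merged into one kernel-verified Lean document; each statement's English description precedes it below -/
import Mathlib

section
/- Let p ≥ 1 and let Σ be a p×p real symmetric positive-definite matrix with condition number c(Σ) = μ_max(Σ)/μ_min(Σ). Then for all indices 1 ≤ i < j ≤ p, the off-diagonal entry satisfies Σ_{i,j} ≥ -((c(Σ)-1)/(c(Σ)+1)) · (Σ_{i,i} + Σ_{j,j})/2. -/
/-!
Evaluate the quadratic form of `S` at `eᵢ + eⱼ` and `eᵢ - eⱼ`. Since `μ_min • 1 ≤ S ≤ μ_max • 1`
in the Loewner order, `Sᵢᵢ + Sⱼⱼ + 2 Sᵢⱼ ≥ 2 μ_min` and `Sᵢᵢ + Sⱼⱼ - 2 Sᵢⱼ ≤ 2 μ_max`. Weighting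
the first by `μ_max` and the second by `μ_min` and subtracting eliminates the eigenvalue
product `μ_min μ_max` and leaves `2 (μ_max + μ_min) Sᵢⱼ ≥ -(μ_max - μ_min)(Sᵢᵢ + Sⱼⱼ)`.
-/

open Matrix
open scoped MatrixOrder

namespace Matrix
variable {n : Type*} [Fintype n]

namespace IsHermitian
variable {𝕜 : Type*} [RCLike 𝕜] [DecidableEq n] {A : Matrix n n 𝕜}

lemma smul_one_le_of_forall_le_eigenvalues (hA : A.IsHermitian) {r : ℝ}
    (hr : ∀ k, r ≤ hA.eigenvalues k) : r • (1 : Matrix n n 𝕜) ≤ A := by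
  rw [← Algebra.algebraMap_eq_smul_one, algebraMap_le_iff_le_spectrum hA.isSelfAdjoint,
    hA.spectrum_real_eq_range_eigenvalues]
  rintro _ ⟨k, rfl⟩
  exact hr k

lemma le_smul_one_of_forall_eigenvalues_le (hA : A.IsHermitian) {r : ℝ}
    (hr : ∀ k, hA.eigenvalues k ≤ r) : A ≤ r • (1 : Matrix n n 𝕜) := by
  rw [← Algebra.algebraMap_eq_smul_one, le_algebraMap_iff_spectrum_le hA.isSelfAdjoint,
    hA.spectrum_real_eq_range_eigenvalues]
  rintro _ ⟨k, rfl⟩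
  exact hr k

end IsHermitian

lemma single_add_single_dotProduct_mulVec {R : Type*} [CommRing R] [DecidableEq n]
    (A : Matrix n n R) (i j : n) (c : R) :
    (Pi.single i 1 + Pi.single j c) ⬝ᵥ (A *ᵥ (Pi.single i 1 + Pi.single j c)) =
      A i i + c * (A i j + A j i) + c ^ 2 * A j j := by
  simp only [mulVec_add, mulVec_single, dotProduct_add, add_dotProduct, single_dotProduct,
    col_apply, MulOpposite.op_one, one_smul, op_smul_eq_smul, one_mul, dotProduct_smul, smul_eq_mul]
  ring

lemma PosSemidef.dotProduct_mulVec_single_add_single_nonneg [DecidableEq n]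
    {D : Matrix n n ℝ} (hD : D.PosSemidef) (i j : n) (c : ℝ) :
    0 ≤ D i i + c * (D i j + D j i) + c ^ 2 * D j j := by
  have := hD.dotProduct_mulVec_nonneg (Pi.single i 1 + Pi.single j c)
  rwa [star_trivial, single_add_single_dotProduct_mulVec] at this

lemma IsHermitian.neg_mul_le_apply_of_eigenvalues_mem_Icc [DecidableEq n]
    {A : Matrix n n ℝ} (hA : A.IsHermitian) {m M : ℝ} (hm : 0 < m)
    (hspec : ∀ k, hA.eigenvalues k ∈ Set.Icc m M) {i j : n} (hij : i ≠ j) :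
    -((M - m) / (M + m)) * ((A i i + A j j) / 2) ≤ A i j := by
  have hsymm : A j i = A i j := by simpa using hA.apply i j
  have hlow := (le_iff.mp <| hA.smul_one_le_of_forall_le_eigenvalues fun k ↦ (hspec k).1)
    |>.dotProduct_mulVec_single_add_single_nonneg i j 1
  have hup := (le_iff.mp <| hA.le_smul_one_of_forall_eigenvalues_le fun k ↦ (hspec k).2)
    |>.dotProduct_mulVec_single_add_single_nonneg i j (-1)
  simp only [sub_apply, smul_apply, one_apply_eq, one_apply_ne hij, one_apply_ne hij.symm,
    smul_eq_mul, hsymm] at hlow hup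
  have hM : 0 < M := hm.trans_le ((hspec i).1.trans (hspec i).2)
  rw [neg_mul, neg_le, div_mul_eq_mul_div, le_div_iff₀ (by positivity)]
  nlinarith

end Matrix

theorem offdiag_lower_bound_condition_number_general
    (p : ℕ)
    (S : Matrix (Fin p) (Fin p) ℝ) (hS : S.PosDef) :
    ∀ i j : Fin p, i < j →
      S i j ≥
        -(((⨆ k, hS.isHermitian.eigenvalues k) / (⨅ k, hS.isHermitian.eigenvalues k) - 1) /
            ((⨆ k, hS.isHermitian.eigenvalues k) / (⨅ k, hS.isHermitian.eigenvalues k) + 1)) *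
          ((S i i + S j j) / 2) := by
  intro i j hij
  have : Nonempty (Fin p) := ⟨i⟩
  set μ := hS.isHermitian.eigenvalues
  have hmin_pos : 0 < ⨅ k, μ k := by
    obtain ⟨k, hk⟩ := exists_eq_ciInf_of_finite (f := μ)
    exact hk ▸ hS.eigenvalues_pos k
  have hspec (k : Fin p) : μ k ∈ Set.Icc (⨅ k, μ k) (⨆ k, μ k) :=
    ⟨ciInf_le (Set.finite_range μ).bddBelow k, le_ciSup (Set.finite_range μ).bddAbove k⟩
  have hratio : ((⨆ k, μ k) / (⨅ k, μ k) - 1) / ((⨆ k, μ k) / (⨅ k, μ k) + 1) =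
      ((⨆ k, μ k) - ⨅ k, μ k) / ((⨆ k, μ k) + ⨅ k, μ k) := by
    field_simp
  rw [ge_iff_le, hratio]
  exact hS.isHermitian.neg_mul_le_apply_of_eigenvalues_mem_Icc hmin_pos hspec hij.ne

/-- For a symmetric positive-definite `p × p` real matrix `S` with condition
number `c = μ_max / μ_min`, every off-diagonal entry satisfies
`S i j ≥ -((c-1)/(c+1)) * (S i i + S j j)/2`. -/
theorem offdiag_lower_bound_condition_number
    (p : ℕ) (hp : 1 ≤ p)
    (S : Matrix (Fin p) (Fin p) ℝ) (hS : S.PosDef) :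
    ∀ i j : Fin p, i < j →
      S i j ≥
        -(((⨆ k, hS.isHermitian.eigenvalues k) / (⨅ k, hS.isHermitian.eigenvalues k) - 1) /
            ((⨆ k, hS.isHermitian.eigenvalues k) / (⨅ k, hS.isHermitian.eigenvalues k) + 1)) *
          ((S i i + S j j) / 2) :=
  offdiag_lower_bound_condition_number_general p S hS
end

section
/- Let K = Qᵀ Δ Q with Q orthogonal and Δ = diag(μ_1,…,μ_n) with μ_i ≥ 0, and let M = Pᵀ D P with P orthogonal and D = diag(d_1,…,d_p) with d_j > 0. Then A_M := (M^{-1} ⊗ K)((M^{-1} ⊗ K) + np I_{np})^{-1} = (P ⊗ Q)ᵀ Λ (P ⊗ Q), where Λ is the diagonal matrix whose entry of index (j−1)n + i equals μ_i/(μ_i + np d_j). Consequently tr(A_M · (Σ ⊗ I_n)) = Σ_{j=1}^p [Σ_{i=1}^n μ_i/(μ_i + np d_j)] · (PΣPᵀ)_{j,j} for any symmetric p×p matrix Σ. -/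
open Matrix
open scoped BigOperators Kronecker

section Aux

variable {m : Type*} [Fintype m] [DecidableEq m]

/-- conjugation by an orthogonal matrix of an inverse of a diagonal with nonzero
entries. -/
lemma conj_diag_inv (u : Matrix m m ℝ) (hu : uᵀ * u = 1)
    (w : m → ℝ) (hw : ∀ i, w i ≠ 0) :
    (uᵀ * Matrix.diagonal w * u)⁻¹ = uᵀ * Matrix.diagonal (fun i => (w i)⁻¹) * u := by
  have hu' : u * uᵀ = 1 := mul_eq_one_comm.mp hu
  apply Matrix.inv_eq_right_inv
  calc uᵀ * Matrix.diagonal w * u * (uᵀ * Matrix.diagonal (fun i => (w i)⁻¹) * u)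
      = uᵀ * (Matrix.diagonal w * ((u * uᵀ) * Matrix.diagonal (fun i => (w i)⁻¹))) * u := by
        simp only [Matrix.mul_assoc]
    _ = uᵀ * (Matrix.diagonal w * Matrix.diagonal (fun i => (w i)⁻¹)) * u := by
        rw [hu', Matrix.one_mul]
    _ = 1 := by
        rw [Matrix.diagonal_mul_diagonal]
        have : (fun i => w i * (w i)⁻¹) = fun _ => (1 : ℝ) := by
          funext i; exact mul_inv_cancel₀ (hw i)
        rw [this, Matrix.diagonal_one, Matrix.mul_one, hu]

end Aux

/-- if `K = Qᵀ Δ Q` (`Q` orthogonal, `Δ = diag μ`, `μ ≥ 0`) and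
`M = Pᵀ D P` (`P` orthogonal, `D = diag d`, `d > 0`), then
`A_M = (M⁻¹ ⊗ K)((M⁻¹ ⊗ K) + np I)⁻¹ = (P ⊗ Q)ᵀ Λ (P ⊗ Q)` with `Λ` diagonal with entries
`μ_i / (μ_i + np d_j)`, and consequently for any symmetric `Σ`,
`tr(A_M (Σ ⊗ I_n)) = ∑_j (∑_i μ_i/(μ_i + np d_j)) (P Σ Pᵀ)_{j,j}`. -/
theorem AM_diagonalization (n p : ℕ) (hn : 1 ≤ n) (hp : 1 ≤ p)
    (Q : Matrix (Fin n) (Fin n) ℝ) (hQ : Qᵀ * Q = 1)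
    (P : Matrix (Fin p) (Fin p) ℝ) (hP : Pᵀ * P = 1)
    (μ : Fin n → ℝ) (hμ : ∀ i, 0 ≤ μ i)
    (d : Fin p → ℝ) (hd : ∀ j, 0 < d j)
    (K : Matrix (Fin n) (Fin n) ℝ) (hK : K = Qᵀ * Matrix.diagonal μ * Q)
    (M : Matrix (Fin p) (Fin p) ℝ) (hM : M = Pᵀ * Matrix.diagonal d * P) :
    (M⁻¹ ⊗ₖ K) *
        ((M⁻¹ ⊗ₖ K) + ((n * p : ℕ) : ℝ) • (1 : Matrix (Fin p × Fin n) (Fin p × Fin n) ℝ))⁻¹ =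
      (P ⊗ₖ Q)ᵀ *
        Matrix.diagonal (fun q : Fin p × Fin n =>
          μ q.2 / (μ q.2 + (n * p : ℕ) * d q.1)) * (P ⊗ₖ Q) ∧
    (∀ S : Matrix (Fin p) (Fin p) ℝ, S.IsSymm →
      Matrix.trace ((M⁻¹ ⊗ₖ K) *
          ((M⁻¹ ⊗ₖ K) + ((n * p : ℕ) : ℝ) •
            (1 : Matrix (Fin p × Fin n) (Fin p × Fin n) ℝ))⁻¹ *
          (S ⊗ₖ (1 : Matrix (Fin n) (Fin n) ℝ))) =
        ∑ j, (∑ i, μ i / (μ i + (n * p : ℕ) * d j)) * ((P * S * Pᵀ) j j)) := by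
  have hP' : P * Pᵀ = 1 := mul_eq_one_comm.mp hP
  have hQ' : Q * Qᵀ = 1 := mul_eq_one_comm.mp hQ
  set c : ℝ := ((n * p : ℕ) : ℝ) with hc
  have hcpos : 0 < c := by
    have : 0 < n * p := Nat.mul_pos hn hp
    rw [hc]; exact_mod_cast this
  set U : Matrix (Fin p × Fin n) (Fin p × Fin n) ℝ := P ⊗ₖ Q with hU
  have hUorth : Uᵀ * U = 1 := by
    rw [hU, ← Matrix.kroneckerMap_transpose, ← Matrix.mul_kronecker_mul, hP, hQ,
      Matrix.one_kronecker_one]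
  have hUorth' : U * Uᵀ = 1 := mul_eq_one_comm.mp hUorth
  -- M⁻¹
  have hdne : ∀ j, d j ≠ 0 := fun j => (hd j).ne'
  have hMinv : M⁻¹ = Pᵀ * Matrix.diagonal (fun j => (d j)⁻¹) * P := by
    rw [hM]
    exact conj_diag_inv P hP d hdne
  set lam : Fin p × Fin n → ℝ := fun q => (d q.1)⁻¹ * μ q.2 with hlam
  have hA : (M⁻¹ ⊗ₖ K) = Uᵀ * Matrix.diagonal lam * U := by
    rw [hMinv, hK, Matrix.mul_kronecker_mul, Matrix.mul_kronecker_mul,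
      Matrix.kroneckerMap_transpose, Matrix.diagonal_kronecker_diagonal, hU]
  have hlamne : ∀ q, lam q + c ≠ 0 := by
    intro q
    have h1 : 0 ≤ lam q := mul_nonneg (inv_nonneg.mpr (hd q.1).le) (hμ q.2)
    positivity
  have hsum : (M⁻¹ ⊗ₖ K) + c • (1 : Matrix (Fin p × Fin n) (Fin p × Fin n) ℝ)
      = Uᵀ * Matrix.diagonal (fun q => lam q + c) * U := by
    have hdc : Matrix.diagonal (fun _ : Fin p × Fin n => c)
        = c • (1 : Matrix (Fin p × Fin n) (Fin p × Fin n) ℝ) := by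
      ext q r
      rcases eq_or_ne q r with h | h <;>
        simp [Matrix.diagonal_apply, Matrix.one_apply, h]
    have h1 : c • (1 : Matrix (Fin p × Fin n) (Fin p × Fin n) ℝ)
        = Uᵀ * Matrix.diagonal (fun _ => c) * U := by
      rw [hdc, Matrix.mul_smul, Matrix.mul_one, Matrix.smul_mul, hUorth]
    rw [hA, h1, ← Matrix.add_mul, ← Matrix.mul_add, ← Matrix.diagonal_add]
  have hinv : ((M⁻¹ ⊗ₖ K) + c • (1 : Matrix (Fin p × Fin n) (Fin p × Fin n) ℝ))⁻¹
      = Uᵀ * Matrix.diagonal (fun q => (lam q + c)⁻¹) * U := by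
    rw [hsum]
    exact conj_diag_inv U hUorth _ hlamne
  have hprod : (M⁻¹ ⊗ₖ K) *
      ((M⁻¹ ⊗ₖ K) + c • (1 : Matrix (Fin p × Fin n) (Fin p × Fin n) ℝ))⁻¹
      = Uᵀ * Matrix.diagonal (fun q => μ q.2 / (μ q.2 + c * d q.1)) * U := by
    rw [hinv, hA]
    calc Uᵀ * Matrix.diagonal lam * U *
          (Uᵀ * Matrix.diagonal (fun q => (lam q + c)⁻¹) * U)
        = Uᵀ * (Matrix.diagonal lam * ((U * Uᵀ) *
            Matrix.diagonal (fun q => (lam q + c)⁻¹))) * U := by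
          simp only [Matrix.mul_assoc]
      _ = Uᵀ * (Matrix.diagonal lam * Matrix.diagonal (fun q => (lam q + c)⁻¹)) * U := by
          rw [hUorth', Matrix.one_mul]
      _ = Uᵀ * Matrix.diagonal (fun q => μ q.2 / (μ q.2 + c * d q.1)) * U := by
          have hfun : (fun q => lam q * (lam q + c)⁻¹)
              = fun q : Fin p × Fin n => μ q.2 / (μ q.2 + c * d q.1) := by
            funext q
            have hd' := hdne q.1
            have hne : μ q.2 + c * d q.1 ≠ 0 := by
              have := hμ q.2; have := hd q.1; positivity
            have h2 : lam q + c = (μ q.2 + c * d q.1) * (d q.1)⁻¹ := by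
              rw [hlam]; field_simp
            rw [h2, mul_inv, inv_inv, hlam]
            field_simp
          rw [Matrix.diagonal_mul_diagonal, hfun]
  refine ⟨hprod, ?_⟩
  intro S _
  rw [hprod]
  have hconj : U * (S ⊗ₖ (1 : Matrix (Fin n) (Fin n) ℝ)) * Uᵀ
      = (P * S * Pᵀ) ⊗ₖ (1 : Matrix (Fin n) (Fin n) ℝ) := by
    rw [hU, ← Matrix.kroneckerMap_transpose, ← Matrix.mul_kronecker_mul,
      ← Matrix.mul_kronecker_mul]
    rw [Matrix.mul_one, hQ']
  calc Matrix.trace (Uᵀ * Matrix.diagonal (fun q => μ q.2 / (μ q.2 + c * d q.1)) * U *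
        (S ⊗ₖ (1 : Matrix (Fin n) (Fin n) ℝ)))
      = Matrix.trace (Matrix.diagonal (fun q => μ q.2 / (μ q.2 + c * d q.1)) *
          (U * (S ⊗ₖ (1 : Matrix (Fin n) (Fin n) ℝ)) * Uᵀ)) := by
        rw [Matrix.mul_assoc, Matrix.mul_assoc, Matrix.trace_mul_comm]
        simp only [Matrix.mul_assoc]
    _ = ∑ j, (∑ i, μ i / (μ i + c * d j)) * ((P * S * Pᵀ) j j) := by
        rw [hconj]
        simp only [Matrix.trace, Matrix.diag, Matrix.diagonal_mul,
          Matrix.kroneckerMap_apply, Matrix.one_apply_eq, mul_one]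
        rw [Fintype.sum_prod_type]
        refine Finset.sum_congr rfl fun j _ => ?_
        rw [Finset.sum_mul]
end
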